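/- Let n ≥ 1 be an integer, m ∈ (0,1), p := 2/(1−m) − n, and B > 0. Let ℓ, k ∈ ℕ, and let h : ℝⁿ → ℝ be a harmonic polynomial (Δh = 0) that is homogeneous of degree ℓ. Define Q : ℝ → ℝ by Q(u) := Σ_{j=0}^{k} [ (k+ℓ−1−p/2)_j · (−k)_j / ( (ℓ+n/2)_j · j! ) ] · (−u/B)^j, where (a)_j := a(a+1)⋯(a+j−1) denotes the rising factorial with (a)_0 := 1, and set Ψ(x) := Q(|x|²)·h(x). Then for every x ∈ ℝⁿ, (B+|x|²)·ΔΨ(x) − (2/(1−m))·x·∇Ψ(x) = λ_{ℓk}·Ψ(x), where λ_{ℓk} := −((ℓ+2k)p + nℓ + 4k(1−ℓ−k)). -/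

import Mathlib

/-!
Write `Ψ = F(|x|²) h` with `F` a polynomial in one variable. Since `Δh = 0` and, by Euler's
identity, `x·∇h = ℓ h`, the product rule gives `ΔΨ = (4uF'' + (2n+4ℓ)F')(|x|²) h` and
`x·∇Ψ = (2uF' + ℓF)(|x|²) h`, so with `2/(1-m) = p + n` the claim reduces to the radial
equation `(B+u)(4uF'' + (2n+4ℓ)F') - (p+n)(2uF' + ℓF) = λ F`.
The substitution `u = -Bt` turns it into the hypergeometric equation
`t(1-t)G'' + (c - (a+b+1)t)G' - abG = 0` with `a = -k`, `b = k+ℓ-1-p/2`, `c = ℓ+n/2`, and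
`Q(u) = ₂F₁(-k, b; c; -u/B)` is its terminating solution, as its coefficients are determined by
`(j+1)(j+c) g_{j+1} = (j+a)(j+b) g_j` with `c + j > 0`.
All of this is exact algebra on polynomials, since the partial derivatives of a polynomial
function on `ℝⁿ` are given by its formal partial derivatives.
-/

open scoped BigOperators

noncomputable section

/-- The `i`-th standard basis vector of `ℝⁿ`. -/
def stdBasis (n : ℕ) (i : Fin n) : EuclideanSpace ℝ (Fin n) :=
  EuclideanSpace.single i 1

/-- The Laplacian (sum of second partial derivatives) of `f : ℝⁿ → ℝ`. -/
def lap (n : ℕ) (f : EuclideanSpace ℝ (Fin n) → ℝ) (x : EuclideanSpace ℝ (Fin n)) : ℝ :=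
  ∑ i : Fin n, fderiv ℝ (fun y => fderiv ℝ f y (stdBasis n i)) x (stdBasis n i)

/-- `x · ∇f x`. -/
def gradDot (n : ℕ) (f : EuclideanSpace ℝ (Fin n) → ℝ) (x : EuclideanSpace ℝ (Fin n)) : ℝ :=
  ∑ i : Fin n, x i * fderiv ℝ f x (stdBasis n i)

/-- The moment parameter `p = 2/(1-m) - n`. -/
def pPar (n : ℕ) (m : ℝ) : ℝ := 2 / (1 - m) - n

/-- The eigenvalues `λ_{ℓk} = -((ℓ+2k)p + nℓ + 4k(1-ℓ-k))`. -/
def lamEig (n : ℕ) (p : ℝ) (ℓ k : ℕ) : ℝ :=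
  -(((ℓ : ℝ) + 2 * (k : ℝ)) * p + (n : ℝ) * (ℓ : ℝ) + 4 * (k : ℝ) * (1 - (ℓ : ℝ) - (k : ℝ)))

/-- Evaluation of a multivariate polynomial as a function on `ℝⁿ`. -/
def evalPoly (n : ℕ) (P : MvPolynomial (Fin n) ℝ) (x : EuclideanSpace ℝ (Fin n)) : ℝ :=
  MvPolynomial.eval (fun i => x i) P

/-- The truncated hypergeometric sum
`Q(u) = Σ_{j=0}^{k} ((k+ℓ-1-p/2)_j (-k)_j)/((ℓ+n/2)_j j!) (-u/B)^j`,
where `(a)_j` is the rising factorial. -/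
def QPoly (n : ℕ) (p B : ℝ) (ℓ k : ℕ) (u : ℝ) : ℝ :=
  ∑ j ∈ Finset.range (k + 1),
    (Polynomial.eval ((k : ℝ) + (ℓ : ℝ) - 1 - p / 2) (ascPochhammer ℝ j) *
        Polynomial.eval (-(k : ℝ)) (ascPochhammer ℝ j) /
      (Polynomial.eval ((ℓ : ℝ) + (n : ℝ) / 2) (ascPochhammer ℝ j) * (j.factorial : ℝ))) *
      (-u / B) ^ j

namespace MvPolynomial

variable {σ R : Type*} [CommRing R] [Fintype σ]

def laplacian (P : MvPolynomial σ R) : MvPolynomial σ R := ∑ i, pderiv i (pderiv i P)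

def eulerOp (P : MvPolynomial σ R) : MvPolynomial σ R := ∑ i, X i * pderiv i P

def sumSqX : MvPolynomial σ R := ∑ i, X i ^ 2

theorem laplacian_mul (P Q : MvPolynomial σ R) :
    laplacian (P * Q) =
      laplacian P * Q + 2 * ∑ i, pderiv i P * pderiv i Q + P * laplacian Q := by
  simp only [laplacian, Derivation.leibniz, smul_eq_mul, map_add, Finset.mul_sum,
    Finset.sum_mul, ← Finset.sum_add_distrib]
  exact Finset.sum_congr rfl fun i _ => by ring

theorem eulerOp_mul (P Q : MvPolynomial σ R) :
    eulerOp (P * Q) = eulerOp P * Q + P * eulerOp Q := by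
  simp only [eulerOp, Derivation.leibniz, smul_eq_mul, Finset.mul_sum, Finset.sum_mul,
    ← Finset.sum_add_distrib]
  exact Finset.sum_congr rfl fun i _ => by ring

theorem pderiv_sumSqX (i : σ) : pderiv i (sumSqX : MvPolynomial σ R) = 2 * X i := by
  classical
  simp [sumSqX, pderiv_X, Pi.single_apply]

open Polynomial (derivative)

theorem pderiv_aeval_sumSqX (i : σ) (F : Polynomial R) :
    pderiv i (Polynomial.aeval sumSqX F) =
      2 * X i * Polynomial.aeval (sumSqX : MvPolynomial σ R) (derivative F) := by
  rw [Derivation.map_aeval, pderiv_sumSqX, smul_eq_mul]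
  ring

theorem laplacian_aeval_sumSqX (F : Polynomial R) :
    laplacian (Polynomial.aeval (sumSqX : MvPolynomial σ R) F) =
      Polynomial.aeval sumSqX (4 * Polynomial.X * derivative (derivative F) +
        2 * (Fintype.card σ : Polynomial R) * derivative F) := by
  have hterm (i : σ) :
      pderiv i (2 * X i * Polynomial.aeval (sumSqX : MvPolynomial σ R) (derivative F)) =
        4 * X i ^ 2 * Polynomial.aeval sumSqX (derivative (derivative F)) +
          2 * Polynomial.aeval sumSqX (derivative F) := by
    have h2 : pderiv i (2 : MvPolynomial σ R) = 0 := by simpa using (pderiv i).map_natCast 2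
    simp only [Derivation.leibniz, pderiv_aeval_sumSqX, pderiv_X_self, h2, smul_eq_mul]
    ring
  simp only [laplacian, pderiv_aeval_sumSqX, hterm, Finset.sum_add_distrib, ← Finset.sum_mul,
    Finset.sum_const, Finset.card_univ, nsmul_eq_mul, map_add, map_mul, Polynomial.aeval_X,
    map_ofNat, map_natCast]
  rw [← Finset.mul_sum, show (∑ i, X i ^ 2 : MvPolynomial σ R) = sumSqX from rfl]
  ring

theorem eulerOp_aeval_sumSqX (F : Polynomial R) :
    eulerOp (Polynomial.aeval (sumSqX : MvPolynomial σ R) F) =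
      Polynomial.aeval sumSqX (2 * Polynomial.X * derivative F) := by
  simp only [eulerOp, pderiv_aeval_sumSqX, map_mul, Polynomial.aeval_X, map_ofNat]
  simp only [sumSqX, Finset.mul_sum, Finset.sum_mul]
  exact Finset.sum_congr rfl fun i _ => by ring

theorem sum_pderiv_aeval_sumSqX_mul_pderiv (F : Polynomial R) (Q : MvPolynomial σ R) :
    ∑ i, pderiv i (Polynomial.aeval sumSqX F) * pderiv i Q =
      2 * Polynomial.aeval sumSqX (derivative F) * eulerOp Q := by
  simp only [eulerOp, pderiv_aeval_sumSqX, Finset.mul_sum]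
  exact Finset.sum_congr rfl fun i _ => by ring

variable {ℓ : ℕ} {h : MvPolynomial σ R}

theorem laplacian_aeval_sumSqX_mul (hΔ : laplacian h = 0) (hh : h.IsHomogeneous ℓ)
    (F : Polynomial R) :
    laplacian (Polynomial.aeval sumSqX F * h) =
      Polynomial.aeval sumSqX (4 * Polynomial.X * derivative (derivative F) +
        (2 * (Fintype.card σ : Polynomial R) + 4 * (ℓ : Polynomial R)) * derivative F) * h := by
  rw [laplacian_mul, laplacian_aeval_sumSqX, sum_pderiv_aeval_sumSqX_mul_pderiv, hΔ, eulerOp,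
    hh.sum_X_mul_pderiv]
  simp only [map_add, map_mul, map_ofNat, map_natCast, nsmul_eq_mul]
  ring

theorem eulerOp_aeval_sumSqX_mul (hh : h.IsHomogeneous ℓ) (F : Polynomial R) :
    eulerOp (Polynomial.aeval sumSqX F * h) =
      Polynomial.aeval sumSqX (2 * Polynomial.X * derivative F + (ℓ : Polynomial R) * F) * h := by
  rw [eulerOp_mul, eulerOp_aeval_sumSqX, eulerOp, hh.sum_X_mul_pderiv]
  simp only [map_add, map_mul, map_natCast, nsmul_eq_mul]
  ring

end MvPolynomial

section Hypergeometric

open Polynomial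

variable {K : Type*} [Field K]

theorem Polynomial.coeff_X_mul_derivative {R : Type*} [Semiring R] (P : R[X]) (j : ℕ) :
    (X * derivative P).coeff j = j * P.coeff j := by
  rcases j with _ | j
  · simp
  · rw [coeff_X_mul, coeff_derivative, ← Nat.cast_succ, Nat.cast_comm]

theorem ordinaryHypergeometricCoefficient_succ [CharZero K] (a b c : K) (j : ℕ)
    (hc : c + j ≠ 0) :
    ((j : K) + 1) * (c + j) * ordinaryHypergeometricCoefficient a b c (j + 1) =
      (a + j) * (b + j) * ordinaryHypergeometricCoefficient a b c j := by
  simp only [ordinaryHypergeometricCoefficient, ascPochhammer_succ_eval, Nat.factorial_succ,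
    Nat.cast_mul, Nat.cast_succ, mul_inv]
  have hj : (j : K) + 1 ≠ 0 := Nat.cast_add_one_ne_zero j
  have hf : (j.factorial : K) ≠ 0 := Nat.cast_ne_zero.2 j.factorial_ne_zero
  field_simp

/-- `₂F₁(-k, b; c; t)`, whose series stops at degree `k`. -/
def terminatingHypergeometric (k : ℕ) (b c : K) : K[X] :=
  ∑ j ∈ Finset.range (k + 1), C (ordinaryHypergeometricCoefficient (-(k : K)) b c j) * X ^ j

theorem coeff_terminatingHypergeometric (k : ℕ) (b c : K) (j : ℕ) :
    (terminatingHypergeometric k b c).coeff j =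
      if j ≤ k then ordinaryHypergeometricCoefficient (-(k : K)) b c j else 0 := by
  simp only [terminatingHypergeometric, finsetSum_coeff, coeff_C_mul_X_pow, Finset.sum_ite_eq,
    Finset.mem_range, Nat.lt_succ_iff]

theorem coeff_terminatingHypergeometric_succ [CharZero K] (k : ℕ) (b c : K)
    (hc : ∀ j < k, c + j ≠ 0) (j : ℕ) :
    ((j : K) + 1) * (c + j) * (terminatingHypergeometric k b c).coeff (j + 1) =
      (j - k) * (b + j) * (terminatingHypergeometric k b c).coeff j := by
  simp only [coeff_terminatingHypergeometric]
  rcases lt_trichotomy j k with hj | rfl | hj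
  · rw [if_pos (Nat.succ_le_of_lt hj), if_pos hj.le,
      ordinaryHypergeometricCoefficient_succ _ _ _ _ (hc j hj)]
    ring
  · simp
  · rw [if_neg (by omega), if_neg (by omega)]
    ring

def hypergeometricOp (a b c : K) (G : K[X]) : K[X] :=
  X * (1 - X) * derivative (derivative G) + (C c - C (a + b + 1) * X) * derivative G -
    C (a * b) * G

theorem hypergeometricOp_terminatingHypergeometric [CharZero K] (k : ℕ) (b c : K)
    (hc : ∀ j < k, c + j ≠ 0) :
    hypergeometricOp (-(k : K)) b c (terminatingHypergeometric k b c) = 0 := by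
  set G := terminatingHypergeometric k b c
  set a : K := -(k : K)
  -- with `θ = X d/dX` the operator is `d/dX (θ + c - 1) - (θ + a)(θ + b)`, whose `j`-th
  -- coefficient is `(j+1)(j+c) g_{j+1} - (j+a)(j+b) g_j`
  have hθ : hypergeometricOp a b c G = derivative (X * derivative G) + C (c - 1) * derivative G -
      (X * derivative (X * derivative G) + C (a + b) * (X * derivative G) + C (a * b) * G) := by
    simp only [hypergeometricOp, derivative_mul, derivative_X, one_mul, map_add, map_sub, map_one]
    ring
  rw [hθ]
  ext j
  have hrec := coeff_terminatingHypergeometric_succ k b c hc j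
  simp only [coeff_sub, coeff_add, coeff_C_mul, coeff_X_mul_derivative, coeff_derivative,
    coeff_zero]
  push_cast at hrec ⊢
  linear_combination hrec

theorem hypergeometricOp_comp [Infinite K] {a b c B : K} (hB : B ≠ 0) {G : K[X]}
    (hG : hypergeometricOp a b c G = 0) :
    (C B + X) * (4 * X * derivative (derivative (G.comp (C (-B⁻¹) * X))) +
        C (4 * c) * derivative (G.comp (C (-B⁻¹) * X))) -
      C (4 * (c - a - b - 1)) * X * derivative (G.comp (C (-B⁻¹) * X)) +
      C (4 * a * b) * G.comp (C (-B⁻¹) * X) = 0 := by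
  refine Polynomial.funext fun u => ?_
  obtain ⟨t, rfl⟩ : ∃ t, u = -B * t := ⟨-u / B, by field_simp⟩
  have hGt := congrArg (eval t) hG
  have ht : -B⁻¹ * (-B * t) = t := by field_simp
  simp only [hypergeometricOp, derivative_comp, derivative_mul, derivative_C, derivative_X,
    eval_add, eval_sub, eval_mul, eval_C, eval_X, eval_comp, eval_one, eval_zero, eval_ofNat,
    zero_mul, mul_one, zero_add, ht] at hGt ⊢
  field_simp
  linear_combination (-4) * hGt

end Hypergeometric

section EvalPoly

open MvPolynomial

theorem evalPoly_mul (n : ℕ) (P Q : MvPolynomial (Fin n) ℝ) (x : EuclideanSpace ℝ (Fin n)) :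
    evalPoly n (P * Q) x = evalPoly n P x * evalPoly n Q x :=
  map_mul _ P Q

theorem hasFDerivAt_evalPoly (n : ℕ) (P : MvPolynomial (Fin n) ℝ)
    (x : EuclideanSpace ℝ (Fin n)) :
    HasFDerivAt (evalPoly n P)
      (∑ i, evalPoly n (pderiv i P) x • EuclideanSpace.proj (𝕜 := ℝ) i) x := by
  induction P using MvPolynomial.induction_on generalizing x with
  | C a =>
    rw [show evalPoly n (C a) = fun _ => a from funext fun _ => eval_C a]
    simpa [evalPoly] using hasFDerivAt_const (𝕜 := ℝ) a x
  | add P Q hP hQ =>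
    rw [show evalPoly n (P + Q) = fun y => evalPoly n P y + evalPoly n Q y from
      funext fun _ => map_add _ P Q]
    refine ((hP x).add (hQ x)).congr_fderiv ?_
    simp [evalPoly, Finset.sum_add_distrib, add_smul]
  | mul_X P i hP =>
    rw [show evalPoly n (P * X i) = fun y => evalPoly n P y * y i from
      funext fun _ => by simp [evalPoly]]
    have hXi : HasFDerivAt (fun y : EuclideanSpace ℝ (Fin n) => y i)
        (EuclideanSpace.proj (𝕜 := ℝ) i) x :=
      (EuclideanSpace.proj i : EuclideanSpace ℝ (Fin n) →L[ℝ] ℝ).hasFDerivAt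
    refine ((hP x).mul hXi).congr_fderiv ?_
    ext v
    simp [evalPoly, Derivation.leibniz, pderiv_X, Pi.single_apply, Finset.sum_add_distrib,
      add_mul, Finset.mul_sum, apply_ite, ite_mul, mul_assoc]

theorem fderiv_evalPoly_stdBasis (n : ℕ) (P : MvPolynomial (Fin n) ℝ)
    (x : EuclideanSpace ℝ (Fin n)) (i : Fin n) :
    fderiv ℝ (evalPoly n P) x (stdBasis n i) = evalPoly n (pderiv i P) x := by
  simp [(hasFDerivAt_evalPoly n P x).fderiv, stdBasis]

theorem lap_evalPoly (n : ℕ) (P : MvPolynomial (Fin n) ℝ) :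
    lap n (evalPoly n P) = evalPoly n (laplacian P) := by
  ext x
  have h1 (i : Fin n) : (fun y => fderiv ℝ (evalPoly n P) y (stdBasis n i)) =
      evalPoly n (pderiv i P) := funext fun y => fderiv_evalPoly_stdBasis n P y i
  rw [lap, laplacian, evalPoly, map_sum]
  refine Finset.sum_congr rfl fun i _ => ?_
  rw [h1, fderiv_evalPoly_stdBasis]
  rfl

theorem gradDot_evalPoly (n : ℕ) (P : MvPolynomial (Fin n) ℝ) :
    gradDot n (evalPoly n P) = evalPoly n (eulerOp P) := by
  ext x
  simp [gradDot, fderiv_evalPoly_stdBasis, eulerOp, evalPoly]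

theorem laplacian_eq_zero_of_lap_evalPoly {n : ℕ} {P : MvPolynomial (Fin n) ℝ}
    (hP : ∀ x, lap n (evalPoly n P) x = 0) : laplacian P = 0 := by
  refine MvPolynomial.funext fun x => ?_
  simpa [lap_evalPoly, evalPoly] using hP (WithLp.toLp 2 x)

theorem evalPoly_aeval_sumSqX (n : ℕ) (F : Polynomial ℝ) (x : EuclideanSpace ℝ (Fin n)) :
    evalPoly n (Polynomial.aeval sumSqX F) x = F.eval (‖x‖ ^ 2) := by
  have hC : (eval fun i => x i).comp (algebraMap ℝ (MvPolynomial (Fin n) ℝ)) = RingHom.id ℝ :=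
    RingHom.ext eval_C
  rw [evalPoly, Polynomial.aeval_def, Polynomial.hom_eval₂, hC, Polynomial.eval₂_id]
  simp [sumSqX, EuclideanSpace.norm_sq_eq]

end EvalPoly

def radialProfile (n : ℕ) (p B : ℝ) (ℓ k : ℕ) : Polynomial ℝ :=
  (terminatingHypergeometric k ((k : ℝ) + ℓ - 1 - p / 2) ((ℓ : ℝ) + n / 2)).comp
    (Polynomial.C (-B⁻¹) * Polynomial.X)

theorem QPoly_eq_eval_radialProfile (n : ℕ) (p B : ℝ) (ℓ k : ℕ) (u : ℝ) :
    QPoly n p B ℓ k u = (radialProfile n p B ℓ k).eval u := by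
  rw [QPoly, radialProfile, Polynomial.eval_comp, terminatingHypergeometric,
    Polynomial.eval_finsetSum]
  refine Finset.sum_congr rfl fun j _ => ?_
  simp only [Polynomial.eval_mul, Polynomial.eval_C, Polynomial.eval_X, Polynomial.eval_pow]
  ring

open Polynomial in
theorem radialProfile_ode {n : ℕ} (hn : 0 < n) {B : ℝ} (hB : B ≠ 0) (p : ℝ) (ℓ k : ℕ) :
    (C B + X) * (4 * X * derivative (derivative (radialProfile n p B ℓ k)) +
        (2 * (n : ℝ[X]) + 4 * (ℓ : ℝ[X])) * derivative (radialProfile n p B ℓ k)) -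
      C (p + n) * (2 * X * derivative (radialProfile n p B ℓ k) +
        (ℓ : ℝ[X]) * radialProfile n p B ℓ k) =
      C (lamEig n p ℓ k) * radialProfile n p B ℓ k := by
  have hn' : (0 : ℝ) < n := Nat.cast_pos.2 hn
  have hc : ∀ j < k, (ℓ : ℝ) + n / 2 + j ≠ 0 := fun j _ => by positivity
  have hode := hypergeometricOp_comp hB
    (hypergeometricOp_terminatingHypergeometric k ((k : ℝ) + ℓ - 1 - p / 2) _ hc)
  refine Polynomial.funext fun u => ?_
  have hu := congrArg (eval u) hode
  simp only [radialProfile, lamEig, eval_add, eval_sub, eval_mul, eval_C, eval_X, eval_ofNat,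
    eval_natCast, eval_zero] at hu ⊢
  linear_combination hu

theorem statement14_general
    (n : ℕ) (hn : 1 ≤ n) (m : ℝ)
    (B : ℝ) (hB : 0 < B) (ℓ k : ℕ)
    (h : MvPolynomial (Fin n) ℝ)
    (hharm : ∀ x, lap n (evalPoly n h) x = 0)
    (hhom : h.IsHomogeneous ℓ) :
    ∀ x : EuclideanSpace ℝ (Fin n),
      (B + ‖x‖ ^ 2) *
          lap n (fun z => QPoly n (pPar n m) B ℓ k (‖z‖ ^ 2) * evalPoly n h z) x -
        (2 / (1 - m)) *
          gradDot n (fun z => QPoly n (pPar n m) B ℓ k (‖z‖ ^ 2) * evalPoly n h z) x =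
      lamEig n (pPar n m) ℓ k * (QPoly n (pPar n m) B ℓ k (‖x‖ ^ 2) * evalPoly n h x) := by
  intro x
  set F := radialProfile n (pPar n m) B ℓ k
  have hΨ : (fun z => QPoly n (pPar n m) B ℓ k (‖z‖ ^ 2) * evalPoly n h z) =
      evalPoly n (Polynomial.aeval MvPolynomial.sumSqX F * h) :=
    funext fun z => by rw [evalPoly_mul, evalPoly_aeval_sumSqX, QPoly_eq_eval_radialProfile]
  have hode :=
    congrArg (Polynomial.eval (‖x‖ ^ 2)) (radialProfile_ode hn hB.ne' (pPar n m) ℓ k)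
  have hp : 2 / (1 - m) = pPar n m + n := by rw [pPar]; ring
  rw [hΨ, lap_evalPoly, gradDot_evalPoly,
    MvPolynomial.laplacian_aeval_sumSqX_mul (laplacian_eq_zero_of_lap_evalPoly hharm) hhom,
    MvPolynomial.eulerOp_aeval_sumSqX_mul hhom, Fintype.card_fin, hp]
  simp only [evalPoly_mul, evalPoly_aeval_sumSqX, QPoly_eq_eval_radialProfile,
    Polynomial.eval_add, Polynomial.eval_sub, Polynomial.eval_mul, Polynomial.eval_C,
    Polynomial.eval_X, Polynomial.eval_ofNat, Polynomial.eval_natCast] at hode ⊢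
  linear_combination evalPoly n h x * hode

/-- **The explicit polynomial eigenfunctions of the linearization**
(Theorem spectrum-from-ARMA): for a harmonic polynomial `h` homogeneous of degree
`ℓ`, the function `Ψ(x) = Q(|x|²) h(x)` satisfies
`(B+|x|²)ΔΨ - (2/(1-m)) x·∇Ψ = λ_{ℓk} Ψ`. -/
theorem statement14
    (n : ℕ) (hn : 1 ≤ n) (m : ℝ) (hm : m ∈ Set.Ioo (0 : ℝ) 1)
    (B : ℝ) (hB : 0 < B) (ℓ k : ℕ)
    (h : MvPolynomial (Fin n) ℝ)
    (hharm : ∀ x, lap n (evalPoly n h) x = 0)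
    (hhom : h.IsHomogeneous ℓ) :
    ∀ x : EuclideanSpace ℝ (Fin n),
      (B + ‖x‖ ^ 2) *
          lap n (fun z => QPoly n (pPar n m) B ℓ k (‖z‖ ^ 2) * evalPoly n h z) x -
        (2 / (1 - m)) *
          gradDot n (fun z => QPoly n (pPar n m) B ℓ k (‖z‖ ^ 2) * evalPoly n h z) x =
      lamEig n (pPar n m) ℓ k * (QPoly n (pPar n m) B ℓ k (‖x‖ ^ 2) * evalPoly n h x) :=
  statement14_general n hn m B hB ℓ k h hharm hhom
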